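/- The Gaussian mechanism on the real line is (ε,δ)-differentially private: let f be a real-valued query with sensitivity Δf = max over neighboring databases d,d' of |f(d) − f(d')|, let ε ∈ (0,1), δ ∈ (0,1), and σ ≥ √(2 ln(1.25/δ))·Δf/ε. Then the mechanism M(d) = f(d) + N(0,σ²) satisfies: for all neighboring d, d' and all measurable sets O ⊆ ℝ, P(M(d) ∈ O) ≤ e^ε · P(M(d') ∈ O) + δ. -/

import Mathlib

/-!
The privacy loss `log (p_m x / p_m' x)` between two Gaussian densities of common variance `σ²` is
affine in `x`, so it exceeds `ε` only on a half-line. Off that half-line the two laws compare with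
factor `e^ε`; on it, `N(m, σ²)` has the mass of a standard normal tail `P(Z > (εσ² - c²/2)/(|c|σ))`,
`c = m - m'`. The choice of `σ` puts this threshold above `L - 1/(2L)`, `L = √(2 log (1.25/δ))`,
and that tail is at most `δ = 1.25 e^{-L²/2}`: by Mills' ratio `P(Z > t) ≤ φ(t)/t` (`φ` the
standard normal density) when `L² ≥ 6/5`, and by `P(Z > t) ≤ 1/2 + |t|/√(2π)` for the remaining
`δ` close to `1`.
-/

open Real MeasureTheory ProbabilityTheory Set Filter
open scoped NNReal ENNReal Topology

lemma MeasureTheory.Measure.withDensity_apply_le_mul_add {α : Type*} [MeasurableSpace α]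
    (μ : Measure α) [SFinite μ] {f g : α → ℝ≥0∞} (hg : Measurable g) {c : ℝ≥0∞} {A : Set α}
    (hfg : ∀ x ∉ A, f x ≤ c * g x) (s : Set α) :
    μ.withDensity f s ≤ c * μ.withDensity g s + μ.withDensity f A := by
  have hsA : μ.withDensity f (s \ A) ≤ c * μ.withDensity g s :=
    calc μ.withDensity f (s \ A) = ∫⁻ x in s \ A, f x ∂μ := withDensity_apply' f _
      _ ≤ ∫⁻ x in s \ A, c * g x ∂μ := setLIntegral_mono (hg.const_mul c) fun x hx => hfg x hx.2
      _ = c * μ.withDensity g (s \ A) := by rw [lintegral_const_mul c hg, withDensity_apply' g]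
      _ ≤ c * μ.withDensity g s := by gcongr; exact sdiff_subset
  calc μ.withDensity f s ≤ μ.withDensity f (s \ A) + μ.withDensity f A :=
        (measure_mono (by simp)).trans (measure_union_le _ _)
    _ ≤ c * μ.withDensity g s + μ.withDensity f A := by gcongr

lemma gaussianPDFReal_le_exp_mul {m m' ε x : ℝ} {v : ℝ≥0}
    (h : (m - m') * (x - m) ≤ ε * v - (m - m') ^ 2 / 2) :
    gaussianPDFReal m v x ≤ exp ε * gaussianPDFReal m' v x := by
  rcases eq_or_ne v 0 with rfl | hv
  · simp [gaussianPDFReal_zero_var]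
  have hv' : (0 : ℝ) < v := by positivity
  rw [gaussianPDFReal, gaussianPDFReal, mul_left_comm, ← exp_add]
  gcongr
  calc -(x - m) ^ 2 / (2 * v)
      = ((x - m') ^ 2 - (x - m) ^ 2) / (2 * v) + -(x - m') ^ 2 / (2 * v) := by ring
    _ ≤ ε + -(x - m') ^ 2 / (2 * v) := by
        gcongr
        rw [div_le_iff₀ (by positivity)]
        nlinarith

lemma gaussianPDFReal_le_inv_sqrt (μ : ℝ) (v : ℝ≥0) (x : ℝ) :
    gaussianPDFReal μ v x ≤ (√(2 * π * v))⁻¹ :=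
  mul_le_of_le_one_right (by positivity) (exp_le_one_iff.2 (by rw [neg_div]; simp; positivity))

lemma gaussianReal_le_mul_volume (μ : ℝ) {v : ℝ≥0} (hv : v ≠ 0) (s : Set ℝ) :
    gaussianReal μ v s ≤ ENNReal.ofReal (√(2 * π * v))⁻¹ * volume s := by
  rw [gaussianReal_apply μ hv, ← setLIntegral_const]
  exact lintegral_mono fun x => ENNReal.ofReal_le_ofReal (gaussianPDFReal_le_inv_sqrt μ v x)

lemma gaussianPDFReal_zero_one (x : ℝ) :
    gaussianPDFReal 0 1 x = (√(2 * π))⁻¹ * exp (-x ^ 2 / 2) := by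
  simp [gaussianPDFReal]

lemma gaussianReal_zero_one_Ioi_zero : gaussianReal 0 1 (Ioi 0) = 2⁻¹ := by
  rw [gaussianReal_apply_eq_integral 0 one_ne_zero]
  simp_rw [gaussianPDFReal_zero_one, integral_const_mul]
  have : ∀ x : ℝ, -x ^ 2 / 2 = -(1 / 2) * x ^ 2 := fun x => by ring
  simp_rw [this, integral_gaussian_Ioi]
  rw [div_div_eq_mul_div, div_one, mul_comm π, mul_div_assoc', inv_mul_cancel₀ (by positivity),
    ENNReal.ofReal_div_of_pos two_pos, ENNReal.ofReal_one, ENNReal.ofReal_ofNat, one_div]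

lemma integrable_mul_exp_neg_sq_div_two : Integrable fun x : ℝ => x * exp (-x ^ 2 / 2) := by
  convert integrable_mul_exp_neg_mul_sq (b := 1 / 2) (by norm_num) using 4 with x
  ring

lemma integral_Ioi_mul_exp_neg_sq_div_two (a : ℝ) :
    ∫ x in Ioi a, x * exp (-x ^ 2 / 2) = exp (-a ^ 2 / 2) := by
  have hderiv : ∀ x ∈ Ici a, HasDerivAt (fun x => -exp (-x ^ 2 / 2)) (x * exp (-x ^ 2 / 2)) x := by
    intro x _
    have h : HasDerivAt (fun y : ℝ => -y ^ 2 / 2) (-x) x :=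
      ((hasDerivAt_pow 2 x).fun_neg.div_const 2).congr_deriv (by norm_num; ring)
    exact h.exp.fun_neg.congr_deriv (by ring)
  have hlim : Tendsto (fun x : ℝ => -exp (-x ^ 2 / 2)) atTop (𝓝 0) := by
    have hsq : Tendsto (fun x : ℝ => -x ^ 2 / 2) atTop atBot :=
      (tendsto_neg_atTop_atBot.comp (tendsto_pow_atTop two_ne_zero)).atBot_div_const two_pos
    simpa using (tendsto_exp_atBot.comp hsq).neg
  rw [integral_Ioi_of_hasDerivAt_of_tendsto' hderiv
    integrable_mul_exp_neg_sq_div_two.integrableOn hlim]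
  ring

lemma gaussianReal_zero_one_Ioi_le {t : ℝ} (ht : 0 < t) :
    gaussianReal 0 1 (Ioi t) ≤ ENNReal.ofReal (exp (-t ^ 2 / 2) / (t * √(2 * π))) := by
  rw [gaussianReal_apply_eq_integral 0 one_ne_zero]
  gcongr
  have hpdf : ∀ x ∈ Ioi t,
      gaussianPDFReal 0 1 x ≤ (t * √(2 * π))⁻¹ * (x * exp (-x ^ 2 / 2)) := by
    intro x hx
    rw [gaussianPDFReal_zero_one,
      show (t * √(2 * π))⁻¹ * (x * exp (-x ^ 2 / 2)) = (√(2 * π))⁻¹ * (x / t * exp (-x ^ 2 / 2)) by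
        field_simp]
    gcongr
    exact le_mul_of_one_le_left (exp_pos _).le ((one_le_div ht).2 (le_of_lt hx))
  calc ∫ x in Ioi t, gaussianPDFReal 0 1 x
      ≤ ∫ x in Ioi t, (t * √(2 * π))⁻¹ * (x * exp (-x ^ 2 / 2)) :=
        setIntegral_mono_on (integrable_gaussianPDFReal _ _).integrableOn
          (integrable_mul_exp_neg_sq_div_two.integrableOn.const_mul _) measurableSet_Ioi hpdf
    _ = exp (-t ^ 2 / 2) / (t * √(2 * π)) := by
        rw [integral_const_mul, integral_Ioi_mul_exp_neg_sq_div_two, inv_mul_eq_div]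

lemma gaussianReal_zero_one_Ioi_le_of_nonpos {t : ℝ} (ht : t ≤ 0) :
    gaussianReal 0 1 (Ioi t) ≤ ENNReal.ofReal (-t / √(2 * π) + 1 / 2) := by
  calc gaussianReal 0 1 (Ioi t) ≤ gaussianReal 0 1 (Ioc t 0) + gaussianReal 0 1 (Ioi 0) := by
        rw [← Ioc_union_Ioi_eq_Ioi ht]; exact measure_union_le _ _
    _ ≤ ENNReal.ofReal (√(2 * π * (1 : ℝ≥0)))⁻¹ * volume (Ioc t 0) + 2⁻¹ := by
        rw [gaussianReal_zero_one_Ioi_zero]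
        gcongr
        exact gaussianReal_le_mul_volume 0 one_ne_zero _
    _ = ENNReal.ofReal (-t / √(2 * π) + 1 / 2) := by
        rw [Real.volume_Ioc, ← ENNReal.ofReal_mul (by positivity),
          ENNReal.ofReal_add _ (by norm_num)]
        · simp [div_eq_inv_mul]
        · have : 0 ≤ -t := by linarith
          positivity

lemma two_point_five_le_sqrt_two_pi : 2.5 ≤ √(2 * π) :=
  Real.le_sqrt_of_sq_le (by nlinarith [pi_gt_d2])

lemma gaussianReal_zero_one_Ioi_sub_le_of_six_fifths_le {L : ℝ} (hL : 0 < L)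
    (hL2 : 6 / 5 ≤ L ^ 2) :
    gaussianReal 0 1 (Ioi (L - 1 / (2 * L))) ≤ ENNReal.ofReal (1.25 * exp (-L ^ 2 / 2)) := by
  have hL1 : 1.09 ≤ L := by nlinarith
  have hinv : 1 / (2 * L) ≤ 0.46 := by rw [div_le_iff₀ (by positivity)]; nlinarith
  have ht : 0.62 ≤ L - 1 / (2 * L) := by linarith
  have ht2 : L ^ 2 - 1 ≤ (L - 1 / (2 * L)) ^ 2 := by
    have : (L - 1 / (2 * L)) ^ 2 = L ^ 2 - 1 + (1 / (2 * L)) ^ 2 := by field_simp; ring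
    nlinarith
  have hexp : exp (1 / 2) ≤ 1.65 := by
    have : exp (1 / 2) * exp (1 / 2) = exp 1 := by rw [← exp_add]; norm_num
    nlinarith [exp_one_lt_d9, exp_pos (1 / 2)]
  refine (gaussianReal_zero_one_Ioi_le (by linarith)).trans (ENNReal.ofReal_le_ofReal ?_)
  calc exp (-(L - 1 / (2 * L)) ^ 2 / 2) / ((L - 1 / (2 * L)) * √(2 * π))
      ≤ exp (1 / 2) * exp (-L ^ 2 / 2) / (0.62 * 2.5) := by
        rw [← exp_add]
        gcongr
        · linarith
        · exact two_point_five_le_sqrt_two_pi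
    _ ≤ 1.25 * exp (-L ^ 2 / 2) := by
        rw [div_le_iff₀ (by norm_num)]
        nlinarith [exp_pos (-L ^ 2 / 2)]

lemma gaussianReal_zero_one_Ioi_sub_le_of_le_six_fifths {L : ℝ} (hL : 0 < L)
    (hL2 : 2 / 5 ≤ L ^ 2) (hL2' : L ^ 2 ≤ 6 / 5) :
    gaussianReal 0 1 (Ioi (L - 1 / (2 * L))) ≤ ENNReal.ofReal (1.25 * exp (-L ^ 2 / 2)) := by
  have hL1 : 0.63 ≤ L := by nlinarith
  have hinv : 1 / (2 * L) ≤ 0.794 := by rw [div_le_iff₀ (by positivity)]; nlinarith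
  have hexp : 0.49 ≤ exp (-L ^ 2 / 2) := by
    have h : 0.7 ≤ exp (-3 / 10) := by linarith [add_one_le_exp (-3 / 10 : ℝ)]
    have : exp (-3 / 10) * exp (-3 / 10) ≤ exp (-L ^ 2 / 2) := by
      rw [← exp_add]; exact exp_le_exp.2 (by linarith)
    nlinarith
  calc gaussianReal 0 1 (Ioi (L - 1 / (2 * L)))
      ≤ gaussianReal 0 1 (Ioi (min (L - 1 / (2 * L)) 0)) :=
        measure_mono (Ioi_subset_Ioi (min_le_left _ _))
    _ ≤ ENNReal.ofReal (-min (L - 1 / (2 * L)) 0 / √(2 * π) + 1 / 2) :=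
        gaussianReal_zero_one_Ioi_le_of_nonpos (min_le_right _ _)
    _ ≤ ENNReal.ofReal (1.25 * exp (-L ^ 2 / 2)) := by
        gcongr
        have hmin : -min (L - 1 / (2 * L)) 0 ≤ 0.17 :=
          neg_le.2 (le_min (by linarith) (by norm_num))
        calc -min (L - 1 / (2 * L)) 0 / √(2 * π) + 1 / 2 ≤ 0.17 / 2.5 + 1 / 2 := by
              gcongr
              · exact two_point_five_le_sqrt_two_pi
          _ ≤ 1.25 * exp (-L ^ 2 / 2) := by linarith

lemma gaussianReal_zero_one_Ioi_sub_le {δ : ℝ} (hδ : 0 < δ) (hδ1 : δ < 1) :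
    gaussianReal 0 1 (Ioi (√(2 * log (1.25 / δ)) - 1 / (2 * √(2 * log (1.25 / δ)))))
      ≤ ENNReal.ofReal δ := by
  set L := √(2 * log (1.25 / δ))
  have hlog : 0 < log (1.25 / δ) := log_pos (by rw [lt_div_iff₀ hδ]; linarith)
  have hL : 0 < L := sqrt_pos.2 (by linarith)
  have hδL : δ = 1.25 * exp (-L ^ 2 / 2) := by
    rw [sq_sqrt (by positivity), show -(2 * log (1.25 / δ)) / 2 = -log (1.25 / δ) by ring,
      exp_neg, exp_log (by positivity)]
    field_simp
  have hL2 : 2 / 5 ≤ L ^ 2 := by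
    by_contra! h
    have : exp (-1 / 5) < exp (-L ^ 2 / 2) := exp_lt_exp.2 (by linarith)
    linarith [add_one_le_exp (-1 / 5 : ℝ)]
  rw [hδL]
  rcases le_total (L ^ 2) (6 / 5) with h | h
  · exact gaussianReal_zero_one_Ioi_sub_le_of_le_six_fifths hL hL2 h
  · exact gaussianReal_zero_one_Ioi_sub_le_of_six_fifths_le hL h

lemma gaussianReal_setOf_lt_mul_sub (m s c : ℝ) {σ : ℝ} (hσ : 0 ≤ σ) :
    gaussianReal m (σ ^ 2).toNNReal {x | s < c * (x - m)}
      = gaussianReal 0 1 {z | s < |c| * σ * z} := by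
  have hmap : (gaussianReal m (σ ^ 2).toNNReal).map (fun x => c * (x - m))
      = (gaussianReal 0 1).map (fun z => |c| * σ * z) := by
    rw [show (fun x => c * (x - m)) = (c * ·) ∘ (· - m) from rfl,
      ← Measure.map_map (measurable_const_mul c) (measurable_sub_const m),
      gaussianReal_map_sub_const, gaussianReal_map_const_mul, gaussianReal_map_const_mul, sub_self,
      mul_zero, mul_zero]
    congr 1
    ext
    simp [mul_pow, sq_abs, hσ]
  calc gaussianReal m (σ ^ 2).toNNReal {x | s < c * (x - m)}
      = (gaussianReal m (σ ^ 2).toNNReal).map (fun x => c * (x - m)) (Ioi s) :=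
        (Measure.map_apply (f := fun x => c * (x - m)) (by fun_prop) measurableSet_Ioi).symm
    _ = gaussianReal 0 1 {z | s < |c| * σ * z} := by
        rw [hmap, Measure.map_apply (by fun_prop) measurableSet_Ioi]
        rfl

lemma mul_sub_inv_two_mul_le {L Δ ε σ a : ℝ} (hL : 0 < L) (ha : 0 ≤ a) (haΔ : a ≤ Δ)
    (hε : 0 < ε) (hε1 : ε ≤ 1) (hσ : L * Δ / ε ≤ σ) :
    a * σ * (L - 1 / (2 * L)) ≤ ε * σ ^ 2 - a ^ 2 / 2 := by
  have hLΔ : L * Δ ≤ σ * ε := (div_le_iff₀ hε).1 hσ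
  have hσ0 : 0 ≤ σ := le_trans (by positivity [ha.trans haΔ]) hσ
  have hLa : L * a ≤ σ * ε := by nlinarith
  have hmain : a * σ * L ≤ ε * σ ^ 2 := by nlinarith [mul_le_mul_of_nonneg_left hLa hσ0]
  have hLa' : L * a ≤ σ := hLa.trans (by nlinarith)
  have hcorr : a ^ 2 / 2 ≤ a * σ / (2 * L) := by
    rw [div_le_div_iff₀ (by norm_num) (by positivity)]
    nlinarith [mul_le_mul_of_nonneg_left hLa' ha]
  have : a * σ * (L - 1 / (2 * L)) = a * σ * L - a * σ / (2 * L) := by field_simp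
  linarith

lemma gaussianReal_le_exp_mul_add (m m' ε : ℝ) {v : ℝ≥0} (hv : v ≠ 0) (s : Set ℝ) :
    gaussianReal m v s ≤ ENNReal.ofReal (exp ε) * gaussianReal m' v s
      + gaussianReal m v {x | ε * v - (m - m') ^ 2 / 2 < (m - m') * (x - m)} := by
  simp only [gaussianReal_of_var_ne_zero _ hv]
  refine Measure.withDensity_apply_le_mul_add volume (measurable_gaussianPDF m' v)
    (fun x hx => ?_) s
  rw [gaussianPDF, gaussianPDF, ← ENNReal.ofReal_mul (exp_nonneg ε)]
  exact ENNReal.ofReal_le_ofReal (gaussianPDFReal_le_exp_mul (not_lt.1 hx))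

/-- The Gaussian mechanism `M(d) = f(d) + N(0,σ²)` is `(ε,δ)`-differentially private
when `σ ≥ √(2 ln(1.25/δ))·Δf/ε`, where `Δf` bounds `|f d − f d'|` on neighboring
databases. -/
theorem gaussian_mechanism_dp {D : Type*} (Neighbor : D → D → Prop) (f : D → ℝ)
    (Δf ε δ σ : ℝ) (hΔ : 0 < Δf)
    (hsens : ∀ d d', Neighbor d d' → |f d - f d'| ≤ Δf)
    (hε : 0 < ε) (hε1 : ε < 1) (hδ : 0 < δ) (hδ1 : δ < 1)
    (hσ : σ ≥ Real.sqrt (2 * Real.log (1.25 / δ)) * Δf / ε) :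
    ∀ d d' (O : Set ℝ), Neighbor d d' → MeasurableSet O →
      gaussianReal (f d) (σ ^ 2).toNNReal O
        ≤ ENNReal.ofReal (Real.exp ε) * gaussianReal (f d') (σ ^ 2).toNNReal O
          + ENNReal.ofReal δ := by
  intro d d' O hN _
  have hlog : 0 < log (1.25 / δ) := log_pos (by rw [lt_div_iff₀ hδ]; linarith)
  have hL : 0 < √(2 * log (1.25 / δ)) := sqrt_pos.2 (by linarith)
  have hσ0 : 0 < σ := lt_of_lt_of_le (by positivity) hσ
  have hv : (σ ^ 2).toNNReal ≠ 0 := by simp [hσ0.ne']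
  have hmargin := mul_sub_inv_two_mul_le hL (abs_nonneg _) (hsens d d' hN) hε hε1.le hσ
  rw [sq_abs] at hmargin
  refine (gaussianReal_le_exp_mul_add (f d) (f d') ε hv O).trans (add_le_add le_rfl ?_)
  rw [Real.coe_toNNReal _ (sq_nonneg σ), gaussianReal_setOf_lt_mul_sub _ _ _ hσ0.le]
  refine (measure_mono fun z hz => ?_).trans (gaussianReal_zero_one_Ioi_sub_le hδ hδ1)
  exact lt_of_mul_lt_mul_left (hmargin.trans_lt hz) (by positivity)
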